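/- arXiv:1910.04134 — 2 statements merged into one kernel-verified Lean document; each statement's English description precedes it below -/
import Mathlib

section
/- Let Z be a random variable with values in [μ_min, μ_max] and mean μ > 0, where μ_min ≥ 0. Then Var[Z] ≤ μ · p, where p = min{μ_max − μ_min, μ_max + μ_min − 2√(μ_min μ_max)}. -/
open MeasureTheory ProbabilityTheory

/-! By the Bhatia–Davis inequality, `Var Z ≤ (μ_max - μ) (μ - μ_min)`. Both bounds then come from
completing a square:
`μ (μ_max - μ_min) - (μ_max - μ) (μ - μ_min) = (μ - μ_min)² + μ_min (μ_max - μ_min)`, and with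
`s = √(μ_min μ_max)`, `μ (μ_max + μ_min - 2 s) - (μ_max - μ) (μ - μ_min) = (μ - s)²`. -/

lemma sub_mul_sub_le_mul_sub {m M : ℝ} (μ : ℝ) (hm : 0 ≤ m) (hmM : m ≤ M) :
    (M - μ) * (μ - m) ≤ μ * (M - m) := by
  nlinarith [sq_nonneg (μ - m), mul_nonneg hm (sub_nonneg.2 hmM)]

lemma sub_mul_sub_le_mul_add_sub_two_mul_sqrt {m M : ℝ} (μ : ℝ) (hmM : 0 ≤ m * M) :
    (M - μ) * (μ - m) ≤ μ * (M + m - 2 * √(m * M)) := by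
  nlinarith [sq_nonneg (μ - √(m * M)), Real.mul_self_sqrt hmM]

theorem stmt6_general {Ω : Type*} [MeasureSpace Ω] [IsProbabilityMeasure (ℙ : Measure Ω)]
    (Z : Ω → ℝ) (hZ : Measurable Z) (μmin μmax : ℝ) (hmin : 0 ≤ μmin)
    (hbound : ∀ᵐ ω ∂(ℙ : Measure Ω), Z ω ∈ Set.Icc μmin μmax) :
    variance Z ℙ ≤ (∫ ω, Z ω ∂(ℙ : Measure Ω)) *
      min (μmax - μmin) (μmax + μmin - 2 * Real.sqrt (μmin * μmax)) := by
  have hmean_nonneg : 0 ≤ ∫ ω, Z ω ∂(ℙ : Measure Ω) :=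
    integral_nonneg_of_ae (hbound.mono fun ω hω ↦ hmin.trans hω.1)
  obtain ⟨ω, hω⟩ := hbound.exists
  have hmM : μmin ≤ μmax := hω.1.trans hω.2
  calc variance Z ℙ
      ≤ (μmax - ∫ ω, Z ω ∂ℙ) * ((∫ ω, Z ω ∂ℙ) - μmin) :=
        variance_le_sub_mul_sub hbound hZ.aemeasurable
    _ ≤ _ := by
      rw [mul_min_of_nonneg _ _ hmean_nonneg]
      exact le_min (sub_mul_sub_le_mul_sub _ hmin hmM)
        (sub_mul_sub_le_mul_add_sub_two_mul_sqrt _ (mul_nonneg hmin (hmin.trans hmM)))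

/-- if 0 ≤ μ_min ≤ Z ≤ μ_max a.s. and μ = E[Z] > 0, then
Var[Z] ≤ μ · p where p = min{μ_max − μ_min, μ_max + μ_min − 2√(μ_min μ_max)}. -/
theorem stmt6 {Ω : Type*} [MeasureSpace Ω] [IsProbabilityMeasure (ℙ : Measure Ω)]
    (Z : Ω → ℝ) (hZ : Measurable Z) (μmin μmax : ℝ) (hmin : 0 ≤ μmin)
    (hbound : ∀ᵐ ω ∂(ℙ : Measure Ω), Z ω ∈ Set.Icc μmin μmax)
    (hμ : 0 < ∫ ω, Z ω ∂(ℙ : Measure Ω)) :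
    variance Z ℙ ≤ (∫ ω, Z ω ∂(ℙ : Measure Ω)) *
      min (μmax - μmin) (μmax + μmin - 2 * Real.sqrt (μmin * μmax)) :=
  stmt6_general Z hZ μmin μmax hmin hbound
end

section
/- Let Z_1, ..., Z_T be i.i.d. random variables in [μ_min, μ_max] with mean μ and Var[Z_j] ≤ pμ, and let μ̂ = (1/T)∑ Z_j. For δ ∈ (0,1), set c = ln(1/δ) and ρ = μ_max − μ_min. Then with probability at least 1 − δ, μ ≥ min{ μ̂ − ρc/(3T), μ̂ − (1/T)(ρc/3 − cp + √((ρc/3 − cp)² + 2Tpc μ̂)) }. -/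
open MeasureTheory ProbabilityTheory Finset

/-!
Centre the samples, `Yⱼ = Zⱼ - μ ≤ ρ`. The elementary bound `eʸ ≤ 1 + y + y² / (2(1 - b/3))`
for `y ≤ b < 3` gives Bernstein's cumulant bound `log E[e^{tY}] ≤ t² Var Y / (2(1 - tρ/3))`, and
Chernoff's inequality at the optimal `t` gives `P(∑ Yⱼ ≥ λ) ≤ exp(-λ² / (2ρλ/3 + 2Tpμ))`, which is
`δ = e^{-c}` at `λ = ρc/3 + √((ρc/3)² + 2cTpμ)`. On the complementary event `D = Tμ̂ - Tμ ≤ λ`,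
either `D ≤ ρc/3`, which is the first branch of the minimum, or `(D - ρc/3)² ≤ (ρc/3)² + 2cTpμ`;
substituting `Tμ = Tμ̂ - D` turns the latter into `(D - A)² ≤ A² + 2pcTμ̂` with `A = ρc/3 - cp`,
which is the second branch.
-/

open Real
open scoped Nat

namespace Real

lemma exp_le_one_add_add_sq_div_two_of_nonpos {u : ℝ} (hu : u ≤ 0) :
    exp u ≤ 1 + u + u ^ 2 / 2 := by
  let f : ℝ → ℝ := fun x ↦ exp x - 1 - x - x ^ 2 / 2
  have hf (x : ℝ) : HasDerivAt f (exp x - 1 - x) x :=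
    ((((hasDerivAt_exp x).sub_const 1).sub (hasDerivAt_id' x)).sub
      ((hasDerivAt_pow 2 x).div_const 2)).congr_deriv (by norm_num)
  have hmono : Monotone f := monotone_of_deriv_nonneg (fun x ↦ (hf x).differentiableAt)
    fun x ↦ by rw [(hf x).deriv]; linarith [add_one_le_exp x]
  have := hmono hu
  simp only [f, exp_zero] at this
  linarith

lemma exp_le_one_add_add_sq_div_of_nonneg {u : ℝ} (hu0 : 0 ≤ u) (hu3 : u < 3) :
    exp u ≤ 1 + u + u ^ 2 / (2 * (1 - u / 3)) := by
  have hq0 : 0 ≤ u / 3 := by positivity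
  have hq1 : u / 3 < 1 := by linarith
  have hsum : Summable (fun n ↦ u ^ n / n !) := summable_pow_div_factorial u
  have hexp : exp u = 1 + u + ∑' n, u ^ (n + 2) / (n + 2)! := by
    rw [exp_eq_exp_ℝ, ← (NormedSpace.expSeries_div_hasSum_exp u).tsum_eq,
      ← hsum.sum_add_tsum_nat_add 2]
    simp [Finset.sum_range_succ]
  -- `2 * 3 ^ n ≤ (n + 2)!` dominates the tail by a geometric series of ratio `u / 3`
  have hterm (n : ℕ) : u ^ (n + 2) / (n + 2)! ≤ u ^ 2 / 2 * (u / 3) ^ n := by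
    have hfac : (2 * 3 ^ n : ℝ) ≤ (n + 2)! := by
      rw [add_comm n]; exact_mod_cast Nat.factorial_mul_pow_le_factorial (m := 2) (n := n)
    calc u ^ (n + 2) / (n + 2)! ≤ u ^ (n + 2) / (2 * 3 ^ n) := by gcongr
      _ = u ^ 2 / 2 * (u / 3) ^ n := by rw [div_pow]; ring
  have htail : ∑' n, u ^ (n + 2) / (n + 2)! ≤ u ^ 2 / 2 * (1 - u / 3)⁻¹ := by
    rw [← tsum_geometric_of_lt_one hq0 hq1, ← tsum_mul_left]
    exact ((summable_nat_add_iff 2).mpr hsum).tsum_le_tsum hterm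
      ((summable_geometric_of_lt_one hq0 hq1).mul_left _)
  have hgeom : u ^ 2 / 2 * (1 - u / 3)⁻¹ = u ^ 2 / (2 * (1 - u / 3)) := by field_simp
  linarith

lemma exp_le_one_add_add_sq_div_of_le {y b : ℝ} (hb0 : 0 ≤ b) (hyb : y ≤ b) (hb3 : b < 3) :
    exp y ≤ 1 + y + y ^ 2 / (2 * (1 - b / 3)) := by
  have hb : 0 < 2 * (1 - b / 3) := by linarith
  rcases le_total y 0 with hy | hy
  · calc exp y ≤ 1 + y + y ^ 2 / 2 := exp_le_one_add_add_sq_div_two_of_nonpos hy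
      _ ≤ _ := by gcongr; linarith
  · calc exp y ≤ 1 + y + y ^ 2 / (2 * (1 - y / 3)) :=
          exp_le_one_add_add_sq_div_of_nonneg hy (by linarith)
      _ ≤ _ := by gcongr

end Real

/-- The deviation `λ` at which Bernstein's bound `exp (-λ² / (2ρλ/3 + 2V))` equals `exp (-c)`:
the positive root of `λ² - 2ρcλ/3 - 2cV = 0`. -/
noncomputable def bernsteinRadius (ρ c V : ℝ) : ℝ := ρ * c / 3 + √((ρ * c / 3) ^ 2 + 2 * c * V)

lemma bernsteinRadius_nonneg {ρ c V : ℝ} (hρ : 0 ≤ ρ) (hc : 0 ≤ c) :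
    0 ≤ bernsteinRadius ρ c V := by
  unfold bernsteinRadius; positivity

lemma sq_bernsteinRadius_div {ρ c V : ℝ} (hρ : 0 ≤ ρ) (hc : 0 ≤ c) (hV : 0 < V) :
    bernsteinRadius ρ c V ^ 2 / (2 / 3 * ρ * bernsteinRadius ρ c V + 2 * V) = c := by
  have hr := bernsteinRadius_nonneg (V := V) hρ hc
  have hsqrt : √((ρ * c / 3) ^ 2 + 2 * c * V) ^ 2 = (ρ * c / 3) ^ 2 + 2 * c * V :=
    sq_sqrt (by positivity)
  rw [div_eq_iff (by positivity)]
  unfold bernsteinRadius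
  linear_combination hsqrt

lemma min_le_of_sum_sub_le_bernsteinRadius {T μ p c ρ S : ℝ} (hT : 0 < T)
    (hS : S - T * μ ≤ bernsteinRadius ρ c (T * (p * μ))) :
    min (S / T - ρ * c / (3 * T))
      (S / T - (1 / T) * (ρ * c / 3 - c * p +
        √((ρ * c / 3 - c * p) ^ 2 + 2 * T * p * c * (S / T)))) ≤ μ := by
  unfold bernsteinRadius at hS
  set a := ρ * c / 3
  set x := √(a ^ 2 + 2 * c * (T * (p * μ)))
  rcases le_or_gt (S - T * μ) a with hSa | hSa
  · refine min_le_of_left_le ?_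
    rw [show S / T - ρ * c / (3 * T) = (S - a) / T by ring, div_le_iff₀ hT]
    linarith
  · refine min_le_of_right_le ?_
    have hx : 0 < x := by linarith
    have hx2 : x ^ 2 = a ^ 2 + 2 * c * (T * (p * μ)) := sq_sqrt (sqrt_pos.mp hx).le
    -- `(D - a)² ≤ x²` for the deviation `D = S - Tμ`, rewritten in terms of `S` alone
    have hsq : (S - T * μ - (a - c * p)) ^ 2 ≤ (a - c * p) ^ 2 + 2 * T * p * c * (S / T) := by
      have : (S - T * μ - a) ^ 2 ≤ x ^ 2 := pow_le_pow_left₀ (by linarith) (by linarith) 2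
      rw [show 2 * T * p * c * (S / T) = 2 * p * c * S by field_simp]
      nlinarith
    have := le_sqrt_of_sq_le hsq
    rw [show ∀ r, S / T - 1 / T * r = (S - r) / T by intro r; ring, div_le_iff₀ hT]
    linarith

section Bernstein

variable {Ω : Type*} {mΩ : MeasurableSpace Ω} {μ : Measure Ω} [IsProbabilityMeasure μ]

lemma cgf_le_of_ae_le_of_integral_eq_zero {Y : Ω → ℝ} {ρ t : ℝ} (hY : MemLp Y 2 μ)
    (hle : ∀ᵐ ω ∂μ, Y ω ≤ ρ) (hmean : μ[Y] = 0) (hρ : 0 ≤ ρ) (ht : 0 ≤ t) (htρ : t * ρ < 3) :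
    cgf Y μ t ≤ t ^ 2 * Var[Y; μ] / (2 * (1 - t * ρ / 3)) := by
  set K := 2 * (1 - t * ρ / 3)
  have hexp_int : Integrable (fun ω ↦ exp (t * Y ω)) μ :=
    integrable_exp_mul_of_le t ρ ht hY.aemeasurable hle
  have hlin_int : Integrable (fun ω ↦ 1 + t * Y ω) μ :=
    (integrable_const 1).add ((hY.integrable one_le_two).const_mul t)
  have hsq_int : Integrable (fun ω ↦ t ^ 2 / K * Y ω ^ 2) μ := hY.integrable_sq.const_mul _
  have hmgf : mgf Y μ t ≤ 1 + t ^ 2 * Var[Y; μ] / K := by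
    calc mgf Y μ t ≤ ∫ ω, (1 + t * Y ω + t ^ 2 / K * Y ω ^ 2) ∂μ := by
          refine integral_mono_ae hexp_int (hlin_int.add hsq_int) ?_
          filter_upwards [hle] with ω hω
          have := exp_le_one_add_add_sq_div_of_le (mul_nonneg ht hρ)
            (mul_le_mul_of_nonneg_left hω ht) htρ
          rw [mul_pow, mul_div_right_comm] at this
          exact this
      _ = 1 + t ^ 2 * Var[Y; μ] / K := by
          rw [integral_add hlin_int hsq_int, integral_add (integrable_const 1)
              ((hY.integrable one_le_two).const_mul t), integral_const_mul, integral_const_mul,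
            hmean, variance_of_integral_eq_zero hY.aemeasurable hmean]
          simp only [integral_const, probReal_univ, one_smul]
          ring
  calc cgf Y μ t = log (mgf Y μ t) := rfl
    _ ≤ mgf Y μ t - 1 := log_le_sub_one_of_pos (mgf_pos hexp_int)
    _ ≤ _ := by linarith

theorem measureReal_sum_ge_le_bernstein {ι : Type*} {Y : ι → Ω → ℝ} {s : Finset ι}
    {ρ V ε : ℝ} (hindep : iIndepFun Y μ) (hmeas : ∀ i, Measurable (Y i))
    (hY : ∀ i, MemLp (Y i) 2 μ) (hle : ∀ i, ∀ᵐ ω ∂μ, Y i ω ≤ ρ) (hmean : ∀ i, μ[Y i] = 0)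
    (hV : ∑ i ∈ s, Var[Y i; μ] ≤ V) (hVpos : 0 < V) (hρ : 0 ≤ ρ) (hε : 0 ≤ ε) :
    μ.real {ω | ε ≤ ∑ i ∈ s, Y i ω} ≤ exp (-ε ^ 2 / (2 / 3 * ρ * ε + 2 * V)) := by
  have hD : 0 < V + ρ * ε / 3 := by positivity
  -- the minimiser of `-t ε + t² V / (2 (1 - t ρ / 3))`
  set t := ε / (V + ρ * ε / 3)
  have ht : 0 ≤ t := by positivity
  have htρ : t * ρ < 3 := by
    rw [div_mul_eq_mul_div, div_lt_iff₀ hD]; nlinarith [mul_nonneg hρ hε]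
  have hK : 0 < 2 * (1 - t * ρ / 3) := by linarith
  have hint (i : ι) : Integrable (fun ω ↦ exp (t * Y i ω)) μ :=
    integrable_exp_mul_of_le t ρ ht (hY i).aemeasurable (hle i)
  have hcgf : cgf (∑ i ∈ s, Y i) μ t ≤ t ^ 2 * V / (2 * (1 - t * ρ / 3)) := by
    rw [hindep.cgf_sum hmeas fun i _ ↦ hint i]
    calc ∑ i ∈ s, cgf (Y i) μ t ≤ ∑ i ∈ s, t ^ 2 * Var[Y i; μ] / (2 * (1 - t * ρ / 3)) :=
          sum_le_sum fun i _ ↦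
            cgf_le_of_ae_le_of_integral_eq_zero (hY i) (hle i) (hmean i) hρ ht htρ
      _ = t ^ 2 * (∑ i ∈ s, Var[Y i; μ]) / (2 * (1 - t * ρ / 3)) := by
          rw [← sum_div, ← mul_sum]
      _ ≤ t ^ 2 * V / (2 * (1 - t * ρ / 3)) := by gcongr
  have hexponent : -t * ε + t ^ 2 * V / (2 * (1 - t * ρ / 3))
      = -ε ^ 2 / (2 / 3 * ρ * ε + 2 * V) := by
    have hK' : 1 - t * ρ / 3 = V / (V + ρ * ε / 3) := by simp only [t]; field_simp; ring
    rw [hK']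
    simp only [t]
    field_simp
    ring
  calc μ.real {ω | ε ≤ ∑ i ∈ s, Y i ω} = μ.real {ω | ε ≤ (∑ i ∈ s, Y i) ω} := by
        simp only [Finset.sum_apply]
    _ ≤ exp (-t * ε + cgf (∑ i ∈ s, Y i) μ t) :=
        measure_ge_le_exp_cgf ε ht (hindep.integrable_exp_mul_sum hmeas fun i _ ↦ hint i)
    _ ≤ exp (-ε ^ 2 / (2 / 3 * ρ * ε + 2 * V)) := by rw [← hexponent]; gcongr

theorem measureReal_bernsteinRadius_lt_sum_sub_le {ι : Type*} {Z : ι → Ω → ℝ} {s : Finset ι}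
    {m ρ c v : ℝ} (hindep : iIndepFun Z μ) (hmeas : ∀ i, Measurable (Z i))
    (hZ : ∀ i, MemLp (Z i) 2 μ) (hle : ∀ i, ∀ᵐ ω ∂μ, Z i ω ≤ m + ρ) (hmean : ∀ i, μ[Z i] = m)
    (hvar : ∀ i, Var[Z i; μ] ≤ v) (hρ : 0 ≤ ρ) (hc : 0 ≤ c) :
    μ.real {ω | bernsteinRadius ρ c (#s * v) < ∑ i ∈ s, Z i ω - #s * m} ≤ exp (-c) := by
  set Y : ι → Ω → ℝ := fun i ω ↦ Z i ω - m
  have hY (i : ι) : MemLp (Y i) 2 μ := (hZ i).sub (memLp_const m)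
  have hYmean (i : ι) : μ[Y i] = 0 := by
    simp [Y, integral_sub ((hZ i).integrable one_le_two) (integrable_const m), hmean i]
  have hYvar (i : ι) : Var[Y i; μ] ≤ v :=
    (variance_sub_const (hmeas i).aestronglyMeasurable m).trans_le (hvar i)
  have hsum (ω : Ω) : ∑ i ∈ s, Z i ω - #s * m = ∑ i ∈ s, Y i ω := by simp [Y, sum_sub_distrib]
  simp only [hsum]
  have hr := bernsteinRadius_nonneg (V := #s * v) hρ hc
  rcases lt_or_ge 0 (#s * v) with hV | hV
  · calc μ.real {ω | bernsteinRadius ρ c (#s * v) < ∑ i ∈ s, Y i ω}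
        ≤ μ.real {ω | bernsteinRadius ρ c (#s * v) ≤ ∑ i ∈ s, Y i ω} :=
          measureReal_mono <| Set.ofPred_subset_ofPred.2 fun _ ↦ le_of_lt
      _ ≤ _ := measureReal_sum_ge_le_bernstein
          (hindep.comp (fun _ z ↦ z - m) fun _ ↦ measurable_id.sub_const m)
          (fun i ↦ (hmeas i).sub_const m) hY
          (fun i ↦ (hle i).mono fun ω hω ↦ by simp only [Y]; linarith)
          hYmean (by simpa using sum_le_sum fun i (_ : i ∈ s) ↦ hYvar i) hV hρ hr
      _ = exp (-c) := by rw [neg_div, sq_bernsteinRadius_div hρ hc hV]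
  -- otherwise every `Y i` with `i ∈ s` has variance zero, so the sum vanishes almost surely
  have hzero : ∀ i ∈ s, ∀ᵐ ω ∂μ, Y i ω = 0 := fun i hi ↦ by
    have hv : v ≤ 0 := nonpos_of_mul_nonpos_right hV (by simpa using ⟨i, hi⟩)
    have := ae_eq_integral_of_variance_eq_zero (hY i)
      (le_antisymm ((hYvar i).trans hv) (variance_nonneg _ _))
    rwa [hYmean i] at this
  have hnull : μ.real {ω | bernsteinRadius ρ c (#s * v) < ∑ i ∈ s, Y i ω} = 0 := by
    rw [measureReal_eq_zero_iff, measure_eq_zero_iff_ae_notMem]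
    filter_upwards [(s.eventually_all).2 hzero] with ω hω
    simp [sum_eq_zero hω, hr]
  rw [hnull]
  positivity

end Bernstein

theorem stmt10_general {Ω : Type*} [MeasureSpace Ω] [IsProbabilityMeasure (ℙ : Measure Ω)]
    (T : ℕ) (hT : 0 < T) (Z : Fin T → Ω → ℝ) (hmeas : ∀ j, Measurable (Z j))
    (hindep : iIndepFun Z ℙ)
    (μmin μmax μ p : ℝ)
    (hbound : ∀ j, ∀ᵐ ω ∂(ℙ : Measure Ω), Z j ω ∈ Set.Icc μmin μmax)
    (hmean : ∀ j, ∫ ω, Z j ω ∂(ℙ : Measure Ω) = μ)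
    (hvar : ∀ j, variance (Z j) ℙ ≤ p * μ)
    (δ : ℝ) (hδ : δ ∈ Set.Ioo (0:ℝ) 1) (c ρ : ℝ)
    (hc : c = Real.log (1 / δ)) (hρ : ρ = μmax - μmin) :
    (ℙ {ω | μ ≥ min
        ((∑ j, Z j ω) / T - ρ * c / (3 * T))
        ((∑ j, Z j ω) / T - (1 / T) * (ρ * c / 3 - c * p +
          Real.sqrt ((ρ * c / 3 - c * p) ^ 2 +
            2 * T * p * c * ((∑ j, Z j ω) / T))))}).toReal ≥ 1 - δ := by
  obtain ⟨hδ0, hδ1⟩ := hδ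
  have hc0 : 0 ≤ c := hc ▸ log_nonneg (one_le_one_div hδ0 hδ1.le)
  have hδc : exp (-c) = δ := by rw [hc, one_div, log_inv, neg_neg, exp_log hδ0]
  have hZ (j : Fin T) : MemLp (Z j) 2 ℙ :=
    memLp_of_bounded (hbound j) (hmeas j).aestronglyMeasurable 2
  have hμ : μ ∈ Set.Icc μmin μmax := by
    have hZ1 := (hZ ⟨0, hT⟩).integrable one_le_two
    rw [← hmean ⟨0, hT⟩]
    constructor
    · simpa using integral_mono_ae (integrable_const μmin) hZ1 ((hbound _).mono fun _ h ↦ h.1)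
    · simpa using integral_mono_ae hZ1 (integrable_const μmax) ((hbound _).mono fun _ h ↦ h.2)
  have hbad := measureReal_bernsteinRadius_lt_sum_sub_le (s := univ) (ρ := ρ) (c := c)
    hindep hmeas hZ (fun j ↦ (hbound j).mono fun ω hω ↦ by linarith [hω.2, hμ.1]) hmean hvar
    (by linarith [hμ.1, hμ.2]) hc0
  simp only [card_univ, Fintype.card_fin] at hbad
  set bad := {ω | bernsteinRadius ρ c (T * (p * μ)) < ∑ j, Z j ω - T * μ}
  have hbad_meas : MeasurableSet bad :=
    measurableSet_lt measurable_const ((Finset.measurable_sum _ fun j _ ↦ hmeas j).sub_const _)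
  rw [ge_iff_le, ← measureReal_def]
  calc 1 - δ ≤ 1 - (ℙ : Measure Ω).real bad := by linarith
    _ = (ℙ : Measure Ω).real badᶜ := (probReal_compl_eq_one_sub hbad_meas).symm
    _ ≤ _ := by
        refine measureReal_mono fun ω hω ↦ ?_
        exact min_le_of_sum_sub_le_bernsteinRadius (by positivity) (not_lt.mp hω)

/-- Lemma 5, lower-bound function: for i.i.d. Z_1,...,Z_T in
[μ_min, μ_max] with mean μ and Var[Z_j] ≤ pμ, empirical mean μ̂, δ ∈ (0,1),
c = ln(1/δ), ρ = μ_max − μ_min, with probability at least 1 − δ,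
μ ≥ min{ μ̂ − ρc/(3T), μ̂ − (1/T)(ρc/3 − cp + √((ρc/3 − cp)² + 2Tpc μ̂)) }. -/
theorem stmt10 {Ω : Type*} [MeasureSpace Ω] [IsProbabilityMeasure (ℙ : Measure Ω)]
    (T : ℕ) (hT : 0 < T) (Z : Fin T → Ω → ℝ) (hmeas : ∀ j, Measurable (Z j))
    (hindep : iIndepFun Z ℙ)
    (hident : ∀ j, IdentDistrib (Z j) (Z ⟨0, hT⟩) ℙ ℙ)
    (μmin μmax μ p : ℝ)
    (hbound : ∀ j, ∀ᵐ ω ∂(ℙ : Measure Ω), Z j ω ∈ Set.Icc μmin μmax)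
    (hmean : ∀ j, ∫ ω, Z j ω ∂(ℙ : Measure Ω) = μ)
    (hvar : ∀ j, variance (Z j) ℙ ≤ p * μ)
    (δ : ℝ) (hδ : δ ∈ Set.Ioo (0:ℝ) 1) (c ρ : ℝ)
    (hc : c = Real.log (1 / δ)) (hρ : ρ = μmax - μmin) :
    (ℙ {ω | μ ≥ min
        ((∑ j, Z j ω) / T - ρ * c / (3 * T))
        ((∑ j, Z j ω) / T - (1 / T) * (ρ * c / 3 - c * p +
          Real.sqrt ((ρ * c / 3 - c * p) ^ 2 +
            2 * T * p * c * ((∑ j, Z j ω) / T))))}).toReal ≥ 1 - δ :=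
  stmt10_general T hT Z hmeas hindep μmin μmax μ p hbound hmean hvar δ hδ c ρ hc hρ
end
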